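/- Let Y = {y₁, y₂} be a two-point set and let η > 0. Define L : (Y → ℝ) → (Y → ℝ) by (L u)(y) = η·(u(ỹ) - u(y)), where ỹ denotes the other point. Define Ψ_Υ(u)(y) = η·Υ(u(ỹ) - u(y)), B_{Υ'}(u,v)(y) = η·Υ'(u(ỹ)-u(y))·(v(ỹ)-v(y)), and Ψ_{2,Υ}(u) = (1/2)(L(Ψ_Υ(u)) - B_{Υ'}(u, Lu)). Then for every u : Y → ℝ and every y ∈ Y, Ψ_{2,Υ}(u)(y) ≥ (1/2)·(L u(y))², i.e. L satisfies CD_Υ(0,2). -/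
import Mathlib


noncomputable def Ups (x : ℝ) : ℝ := Real.exp x - 1 - x

noncomputable def Ups' (x : ℝ) : ℝ := Real.exp x - 1

/-- Two-point graph Laplacian with weight η. -/
noncomputable def Ltp (η : ℝ) (u : Bool → ℝ) (y : Bool) : ℝ := η * (u (!y) - u y)

noncomputable def PsiUpsTp (η : ℝ) (u : Bool → ℝ) (y : Bool) : ℝ := η * Ups (u (!y) - u y)

noncomputable def BUps'Tp (η : ℝ) (u v : Bool → ℝ) (y : Bool) : ℝ :=
  η * Ups' (u (!y) - u y) * (v (!y) - v y)

noncomputable def Psi2UpsTp (η : ℝ) (u : Bool → ℝ) (y : Bool) : ℝ :=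
  (1 / 2) * (Ltp η (PsiUpsTp η u) y - BUps'Tp η u (Ltp η u) y)

lemma keyneg (b : ℝ) (hb : 0 < b) :
    Real.exp b - Real.exp (-b) - 2*b*Real.exp (-b) ≥ b^2 := by
  have hF4 : 1 + b + b^2/2 + b^3/6 + b^4/24 ≤ Real.exp b := by
    have := Real.sum_le_exp_of_nonneg hb.le 5
    simp [Finset.sum_range_succ, Nat.factorial] at this
    norm_num at this ⊢
    linarith
  have hq : 1 + b + b^2/2 ≤ Real.exp b := by nlinarith [pow_pos hb 3, pow_pos hb 4]
  have hEpos := Real.exp_pos (-b)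
  have hQpos : (0:ℝ) < 1 + b + b^2/2 := by nlinarith
  have hEQ : Real.exp (-b) * (1 + b + b^2/2) ≤ 1 := by
    calc Real.exp (-b) * (1 + b + b^2/2) ≤ Real.exp (-b) * Real.exp b :=
          mul_le_mul_of_nonneg_left hq hEpos.le
      _ = 1 := by rw [← Real.exp_add]; simp
  have h1 : (1+2*b) * (Real.exp (-b) * (1 + b + b^2/2)) ≤ 1+2*b :=
    (mul_le_of_le_one_right (by linarith) hEQ)
  have h2 : (1 + b + b^2/2 + b^3/6 + b^4/24) * (1 + b + b^2/2) ≤ Real.exp b * (1 + b + b^2/2) :=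
    mul_le_mul_of_nonneg_right hF4 hQpos.le
  nlinarith [sq_nonneg b, sq_nonneg (b^2-1), pow_pos hb 3, pow_pos hb 4, pow_pos hb 5,
    pow_pos hb 6, hQpos, mul_pos hb hb]

lemma key (a : ℝ) : Real.exp (-a) - Real.exp a + 2*a*Real.exp a ≥ a^2 := by
  rcases le_or_gt 0 a with h | h
  · have hq : 1 + a + a^2/2 ≤ Real.exp a := Real.quadratic_le_exp_of_nonneg h
    have hF : 1 - a ≤ Real.exp (-a) := by linarith [Real.add_one_le_exp (-a)]
    have hFpos := Real.exp_pos (-a)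
    have hEpos := Real.exp_pos a
    have hEF : Real.exp a * Real.exp (-a) = 1 := by rw [← Real.exp_add]; simp
    nlinarith [mul_pos hEpos hFpos, sq_nonneg a, sq_nonneg (a-1), mul_nonneg h (sq_nonneg a),
      mul_nonneg (mul_nonneg h h) (sq_nonneg a)]
  · have hk := keyneg (-a) (by linarith)
    rw [neg_neg] at hk
    nlinarith [hk]

theorem twoPoint_CD_Ups (η : ℝ) (hη : 0 < η) (u : Bool → ℝ) (y : Bool) :
    Psi2UpsTp η u y ≥ (1 / 2) * (Ltp η u y) ^ 2 := by
  simp only [Psi2UpsTp, Ltp, PsiUpsTp, BUps'Tp, Ups, Ups', Bool.not_not]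
  set a := u (!y) - u y with ha
  have hmy : u y - u (!y) = -a := by rw [ha]; ring
  rw [hmy]
  clear_value a
  have hk := key a
  have h2 : η^2 * a^2 ≤ η^2 * (Real.exp (-a) - Real.exp a + 2*a*Real.exp a) :=
    mul_le_mul_of_nonneg_left hk (sq_nonneg η)
  nlinarith [h2]
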